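/- Let h ≥ 1 and let S_0 ≥ S_1 ≥ … ≥ S_h be a nonincreasing sequence of positive real numbers satisfying S_0 = S_1, and set Tot = Σ_{k=0}^{h} S_k. Then there exists an index z ∈ {0,…,h} such that Tot/3 ≤ Σ_{k=0}^{z} S_k ≤ 2·Tot/3. -/

import Mathlib

/-! Take the first prefix sum reaching a third of the total. If it is the first term `S 0`, it is
at most half the total because `S 0 = S 1`. Otherwise it exceeds the previous prefix sum, which
is below a third, by one term `S z ≤ S 0`, and `S 0` is itself part of that previous prefix sum;
so it stays below two thirds. -/

open Finset

lemma le_apply_zero_of_succ_le {a : ℕ → ℝ} {n : ℕ} (ha : ∀ k < n, a (k + 1) ≤ a k) :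
    ∀ k ≤ n, a k ≤ a 0
  | 0, _ => le_rfl
  | k + 1, hk => (ha k hk).trans (le_apply_zero_of_succ_le ha k (Nat.le_of_succ_le hk))

lemma exists_prefix_sum_ge_le_max {a : ℕ → ℝ} {n : ℕ} (hnonneg : ∀ k ≤ n, 0 ≤ a k)
    (hle : ∀ k ≤ n, a k ≤ a 0) {t : ℝ} (ht : t ≤ ∑ k ∈ range (n + 1), a k) :
    ∃ z ≤ n, t ≤ ∑ k ∈ range (z + 1), a k ∧
      ∑ k ∈ range (z + 1), a k ≤ max (a 0) (2 * t) := by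
  classical
  have hex : ∃ z, t ≤ ∑ k ∈ range (z + 1), a k := ⟨n, ht⟩
  have hzn : Nat.find hex ≤ n := Nat.find_min' hex ht
  refine ⟨Nat.find hex, hzn, Nat.find_spec hex, ?_⟩
  cases hz : Nat.find hex with
  | zero => simp
  | succ m =>
    rw [hz] at hzn
    have hprev : ∑ k ∈ range (m + 1), a k < t :=
      not_le.mp (Nat.find_min hex (m := m) (by omega))
    have hfirst : a 0 ≤ ∑ k ∈ range (m + 1), a k :=
      single_le_sum (fun k hk => hnonneg k (by simp at hk; omega)) (by simp)
    have hlast : a (m + 1) ≤ a 0 := hle _ (by omega)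
    rw [sum_range_succ]
    exact le_max_of_le_right (by linarith)

/-- Combinatorial core of the one-third version-space splitting lemma:
for a nonincreasing sequence of positive reals `S 0 ≥ S 1 ≥ … ≥ S h` with
`S 0 = S 1`, some prefix sum lies between one third and two thirds of the total. -/
theorem one_third_splitting (h : ℕ) (hh : 1 ≤ h) (S : ℕ → ℝ)
    (hpos : ∀ k ≤ h, 0 < S k)
    (hmono : ∀ k, k < h → S (k + 1) ≤ S k)
    (h01 : S 0 = S 1) :
    ∃ z ≤ h,
      (∑ k ∈ Finset.range (h + 1), S k) / 3 ≤ ∑ k ∈ Finset.range (z + 1), S k ∧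
      ∑ k ∈ Finset.range (z + 1), S k ≤ 2 * (∑ k ∈ Finset.range (h + 1), S k) / 3 := by
  set total := ∑ k ∈ range (h + 1), S k
  have hnonneg : ∀ k ≤ h, 0 ≤ S k := fun k hk => (hpos k hk).le
  have htwo : ∑ k ∈ range 2, S k ≤ total := sum_le_sum_of_subset_of_nonneg
    (range_subset_range.mpr (by omega)) (fun k hk _ => hnonneg k (by simp at hk; omega))
  rw [sum_range_succ, sum_range_one] at htwo
  have htotal : 0 ≤ total := sum_nonneg fun k hk => hnonneg k (by simp at hk; omega)
  obtain ⟨z, hz, hlow, hhigh⟩ := exists_prefix_sum_ge_le_max hnonneg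
    (le_apply_zero_of_succ_le hmono) (t := total / 3) (by linarith)
  exact ⟨z, hz, hlow, hhigh.trans (max_le (by linarith) (by linarith))⟩
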